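/- arXiv:0905.2085 — 3 statements merged into one kernel-verified Lean document; each statement's English description precedes it below -/
import Mathlib

section
/- (Bosonic Stokes theorem of Clifford analysis, on a box.) Let Ω ⊆ ℝ^m be open, K = Π_{i=1}^m [a_i,b_i] ⊂ Ω a compact box with faces F_i^+ = {x ∈ K : x_i = b_i} and F_i^− = {x ∈ K : x_i = a_i}, and let f, g : Ω → Cl_{0,m} be of class C¹. Then Σ_{i=1}^m ( ∫_{F_i^+} f·e_i·g dS − ∫_{F_i^−} f·e_i·g dS ) = ∫_K ( (f∂)·g + f·(∂g) ) dV, where dS is (m−1)-dimensional Lebesgue measure on the faces and dV is Lebesgue measure on ℝ^m. (The left-hand side is the Clifford surface integral ∫_{∂K} f dσ g, dσ = n̲ dS with n̲ the outward unit normal written as a Clifford vector.) -/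
/-!
STATEMENT 7 (bosonic Stokes theorem of Clifford analysis, on a box): for a compact box
K = Π[a_i,b_i] inside an open Ω ⊆ ℝ^m and C¹ functions f, g : Ω → Cl_{0,m},
Σ_i (∫_{F_i^+} f e_i g dS − ∫_{F_i^−} f e_i g dS) = ∫_K ((f∂)g + f(∂g)) dV.
-/

noncomputable section
open MeasureTheory

namespace BosonicStokes

variable (m : ℕ)

/-- The real Clifford algebra Cl_{0,m}: the Clifford algebra of the negative definite
quadratic form −|x|² on ℝ^m. -/
abbrev Cl (m : ℕ) : Type :=
  CliffordAlgebra (QuadraticMap.weightedSumSquares ℝ (fun _ : Fin m => (-1:ℝ)))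

/-- The Clifford generators e_i, satisfying e_je_k + e_ke_j = −2δ_{jk}. -/
def e {m : ℕ} (i : Fin m) : Cl m :=
  CliffordAlgebra.ι (QuadraticMap.weightedSumSquares ℝ (fun _ : Fin m => (-1:ℝ)))
    (Pi.single i 1)

variable {V : Type*} [AddCommGroup V] [Module ℝ V]

/-- A V-valued function is of class C¹ on s when all of its components with respect to a
(Hamel) basis of V are; for finite-dimensional V this is the usual notion. -/
def C1On {m : ℕ} (F : (Fin m → ℝ) → V) (s : Set (Fin m → ℝ)) : Prop :=
  ∀ I, ContDiffOn ℝ 1 (fun x => (Module.Basis.ofVectorSpace ℝ V).coord I (F x)) s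

/-- The partial derivative ∂_{x_j} of a V-valued function, computed componentwise with
respect to a (Hamel) basis of V. -/
def pd {m : ℕ} (j : Fin m) (F : (Fin m → ℝ) → V) (x : Fin m → ℝ) : V :=
  ∑ᶠ I, (fderiv ℝ (fun z => (Module.Basis.ofVectorSpace ℝ V).coord I (F z)) x (Pi.single j 1)) •
     Module.Basis.ofVectorSpace ℝ V I

/-- The integral of a V-valued function over S with respect to μ, computed componentwise
with respect to a (Hamel) basis of V. -/
def vInt {X : Type*} [MeasurableSpace X] (μ : Measure X) (S : Set X) (F : X → V) : V :=
  ∑ᶠ I, (∫ x in S, (Module.Basis.ofVectorSpace ℝ V).coord I (F x) ∂μ) • Module.Basis.ofVectorSpace ℝ V I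

/-- The integral of a V-valued function over the face x_i = c of the box [a,b] ⊂ ℝ^m,
with respect to (m−1)-dimensional Lebesgue measure: the face is parametrized by the
remaining m−1 coordinates. -/
def faceInt {m : ℕ} (a b : Fin m → ℝ) (i : Fin m) (c : ℝ) (F : (Fin m → ℝ) → V) : V :=
  vInt (volume : Measure ({j : Fin m // j ≠ i} → ℝ))
    (Set.Icc (fun j => a j.1) (fun j => b j.1))
    (fun x' => F (fun j => if h : j = i then c else x' ⟨j, h⟩))

/-- The left Dirac derivative ∂g = Σ_j e_j ∂_{x_j}g. -/
def leftDb {m : ℕ} (g : (Fin m → ℝ) → Cl m) (x : Fin m → ℝ) : Cl m :=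
  ∑ j : Fin m, e j * pd j g x

/-- The right Dirac derivative f∂ = Σ_j (∂_{x_j}f) e_j. -/
def rightDb {m : ℕ} (f : (Fin m → ℝ) → Cl m) (x : Fin m → ℝ) : Cl m :=
  ∑ j : Fin m, pd j f x * e j

end BosonicStokes

/-!
A coordinate functional `λ` of the finite-dimensional algebra `Cl_{0,m}` (finite-dimensional
because it is linearly isomorphic to the exterior algebra of `ℝ^m`) turns the identity into the
divergence theorem on the box for the real vector field `Φ_i(x) = λ(f(x) e_i g(x))`, whose
boundary flux is the left-hand side. As `(u, w) ↦ λ(u e_i w)` is bilinear, the product rule gives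
`div Φ = Σ_i λ(∂_i f e_i g + f e_i ∂_i g) = λ((f∂) g + f (∂g))`.
-/

open Set

instance ExteriorAlgebra.instFinite {K M : Type*} [Field K] [AddCommGroup M] [Module K M]
    [FiniteDimensional K M] : Module.Finite K (ExteriorAlgebra K M) := by
  have htop : ⨆ n, ⋀[K]^n M = ⊤ :=
    (DirectSum.Decomposition.isInternal (fun n : ℕ => ⋀[K]^n M)).submodule_iSup_eq_top
  have hvanish : ∀ n, Module.finrank K M < n → ⋀[K]^n M = ⊥ := fun n hn =>
    Submodule.finrank_eq_zero.1 (by rw [exteriorPower.finrank_eq, Nat.choose_eq_zero_of_lt hn])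
  have hsup : ⨆ n ∈ Finset.range (Module.finrank K M + 1), ⋀[K]^n M = ⊤ := by
    refine top_unique (htop ▸ iSup_le fun n => ?_)
    rcases le_or_gt n (Module.finrank K M) with hn | hn
    · exact le_biSup (fun n => ⋀[K]^n M) (Finset.mem_range.2 (Nat.lt_succ_of_le hn))
    · simp [hvanish n hn]
  rw [Module.finite_def, ← hsup]
  exact Submodule.fg_biSup _ _ fun n _ => Module.Finite.iff_fg.1 inferInstance

instance CliffordAlgebra.instFinite {K M : Type*} [Field K] [Invertible (2 : K)] [AddCommGroup M]
    [Module K M] [FiniteDimensional K M] {Q : QuadraticForm K M} :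
    Module.Finite K (CliffordAlgebra Q) :=
  Module.Finite.equiv (CliffordAlgebra.equivExterior Q).symm

theorem MeasureTheory.setIntegral_Icc_comp_piCongrLeft {ι ι' E : Type*} [Fintype ι] [Fintype ι']
    [NormedAddCommGroup E] [NormedSpace ℝ E] (κ : ι' ≃ ι) (a b : ι → ℝ) (h : (ι → ℝ) → E) :
    ∫ x in Icc a b, h x = ∫ y in Icc (a ∘ κ) (b ∘ κ), h (fun j => y (κ.symm j)) := by
  have hT : ∀ y, MeasurableEquiv.piCongrLeft (fun _ : ι => ℝ) κ y = fun j => y (κ.symm j) :=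
    fun y => by ext j; simp [MeasurableEquiv.piCongrLeft, Equiv.piCongrLeft_apply]
  have hpre : MeasurableEquiv.piCongrLeft (fun _ : ι => ℝ) κ ⁻¹' Icc a b =
      Icc (a ∘ κ) (b ∘ κ) := by
    ext y
    simp only [mem_preimage, hT, mem_Icc, Pi.le_def, Function.comp_apply,
      ← κ.forall_congr_right (q := fun i => a i ≤ y (κ.symm i)),
      ← κ.forall_congr_right (q := fun i => y (κ.symm i) ≤ b i), Equiv.symm_apply_apply]
  rw [← (volume_measurePreserving_piCongrLeft _ κ).setIntegral_preimage_emb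
    (MeasurableEquiv.measurableEmbedding _), hpre]
  simp only [hT]

theorem MeasureTheory.integral_divergence_bilinear_of_contDiffOn {n : ℕ} {E F G : Type*}
    [NormedAddCommGroup E] [NormedSpace ℝ E] [NormedAddCommGroup F] [NormedSpace ℝ F]
    [NormedAddCommGroup G] [NormedSpace ℝ G] [CompleteSpace G]
    {Ω : Set (Fin (n + 1) → ℝ)} (hΩ : IsOpen Ω) {a b : Fin (n + 1) → ℝ} (hab : a ≤ b)
    (hK : Icc a b ⊆ Ω) {f : (Fin (n + 1) → ℝ) → E} {g : (Fin (n + 1) → ℝ) → F}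
    (hf : ContDiffOn ℝ 1 f Ω) (hg : ContDiffOn ℝ 1 g Ω) (B : Fin (n + 1) → E →L[ℝ] F →L[ℝ] G) :
    ∫ x in Icc a b, ∑ i, (B i (f x) (fderiv ℝ g x (Pi.single i 1)) +
        B i (fderiv ℝ f x (Pi.single i 1)) (g x)) =
      ∑ i, ((∫ y in Icc (a ∘ i.succAbove) (b ∘ i.succAbove),
          B i (f (i.insertNth (b i) y)) (g (i.insertNth (b i) y))) -
        ∫ y in Icc (a ∘ i.succAbove) (b ∘ i.succAbove),
          B i (f (i.insertNth (a i) y)) (g (i.insertNth (a i) y))) := by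
  have hf' : ∀ x ∈ Ω, HasFDerivAt f (fderiv ℝ f x) x := fun x hx =>
    ((hf.contDiffAt (hΩ.mem_nhds hx)).differentiableAt one_ne_zero).hasFDerivAt
  have hg' : ∀ x ∈ Ω, HasFDerivAt g (fderiv ℝ g x) x := fun x hx =>
    ((hg.contDiffAt (hΩ.mem_nhds hx)).differentiableAt one_ne_zero).hasFDerivAt
  have hfd : ContinuousOn (fderiv ℝ f) (Icc a b) :=
    (hf.continuousOn_fderiv_of_isOpen hΩ le_rfl).mono hK
  have hgd : ContinuousOn (fderiv ℝ g) (Icc a b) :=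
    (hg.continuousOn_fderiv_of_isOpen hΩ le_rfl).mono hK
  have hfc := hf.continuousOn.mono hK
  have hgc := hg.continuousOn.mono hK
  have hint : IntegrableOn (fun x => ∑ i, (B i (f x) (fderiv ℝ g x (Pi.single i 1)) +
      B i (fderiv ℝ f x (Pi.single i 1)) (g x))) (Icc a b) :=
    ContinuousOn.integrableOn_compact isCompact_Icc (by fun_prop)
  have hIoo : (pi univ fun i => Ioo (a i) (b i)) ⊆ Icc a b :=
    (pi_mono fun i _ => Ioo_subset_Icc_self).trans (pi_univ_Icc a b).subset
  have hdiv := integral_divergence_of_hasFDerivAt_off_countable' a b hab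
    (fun i x => B i (f x) (g x))
    (fun i x => (B i).precompR _ (f x) (fderiv ℝ g x) + (B i).precompL _ (fderiv ℝ f x) (g x))
    ∅ countable_empty (fun i => by fun_prop)
    (fun x hx i => (B i).hasFDerivAt_of_bilinear (hf' x (hK (hIoo hx.1))) (hg' x (hK (hIoo hx.1))))
    hint
  simpa using hdiv

namespace BosonicStokes

section Coordinates

variable {V W : Type*} [AddCommGroup V] [Module ℝ V] [FiniteDimensional ℝ V]
  [AddCommGroup W] [Module ℝ W] [FiniteDimensional ℝ W]

theorem coord_vInt {X : Type*} [MeasurableSpace X] (μ : Measure X) (S : Set X) (F : X → V)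
    (I : Module.Basis.ofVectorSpaceIndex ℝ V) :
    (Module.Basis.ofVectorSpace ℝ V).coord I (vInt μ S F) =
      ∫ x in S, (Module.Basis.ofVectorSpace ℝ V).coord I (F x) ∂μ := by
  rw [vInt, finsum_eq_sum_of_fintype, ← Module.Basis.equivFun_symm_apply,
    Module.Basis.coord_equivFun_symm]

theorem coord_faceInt {n : ℕ} (a b : Fin (n + 1) → ℝ) (i : Fin (n + 1)) (c : ℝ)
    (F : (Fin (n + 1) → ℝ) → V) (I : Module.Basis.ofVectorSpaceIndex ℝ V) :
    (Module.Basis.ofVectorSpace ℝ V).coord I (faceInt a b i c F) =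
      ∫ y in Icc (a ∘ i.succAbove) (b ∘ i.succAbove),
        (Module.Basis.ofVectorSpace ℝ V).coord I (F (i.insertNth c y)) := by
  rw [faceInt, coord_vInt, setIntegral_Icc_comp_piCongrLeft (finSuccAboveEquiv i)]
  refine setIntegral_congr_fun measurableSet_Icc fun y _ => ?_
  congr 2
  funext j
  rcases eq_or_ne j i with rfl | hj
  · simp
  · obtain ⟨k, rfl⟩ := Fin.exists_succAbove_eq hj
    simp only [dif_neg hj, Fin.insertNth_apply_succAbove]
    exact congrArg y ((finSuccAboveEquiv i).symm_apply_apply k)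

theorem C1On.contDiffOn_equivFun {m : ℕ} {F : (Fin m → ℝ) → V} {s : Set (Fin m → ℝ)}
    (h : C1On F s) : ContDiffOn ℝ 1 (fun x => (Module.Basis.ofVectorSpace ℝ V).equivFun (F x)) s :=
  contDiffOn_pi.2 fun I => by simpa using h I

theorem pd_eq_equivFun_symm_fderiv {m : ℕ} {F : (Fin m → ℝ) → V} {x : Fin m → ℝ}
    (h : DifferentiableAt ℝ (fun x => (Module.Basis.ofVectorSpace ℝ V).equivFun (F x)) x)
    (j : Fin m) :
    pd j F x = (Module.Basis.ofVectorSpace ℝ V).equivFun.symm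
      (fderiv ℝ (fun x => (Module.Basis.ofVectorSpace ℝ V).equivFun (F x)) x (Pi.single j 1)) := by
  rw [pd, finsum_eq_sum_of_fintype, Module.Basis.equivFun_symm_apply]
  refine Finset.sum_congr rfl fun I _ => ?_
  have hcoord := (hasFDerivAt_pi'.1 h.hasFDerivAt I).fderiv
  simp only [Module.Basis.equivFun_apply] at hcoord
  simp [hcoord]

theorem integral_divergence_bilinear_of_C1On {n : ℕ} {G : Type*} [NormedAddCommGroup G]
    [NormedSpace ℝ G] [CompleteSpace G] {Ω : Set (Fin (n + 1) → ℝ)} (hΩ : IsOpen Ω)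
    {a b : Fin (n + 1) → ℝ} (hab : a ≤ b) (hK : Icc a b ⊆ Ω) {f : (Fin (n + 1) → ℝ) → V}
    {g : (Fin (n + 1) → ℝ) → W} (hf : C1On f Ω) (hg : C1On g Ω)
    (β : Fin (n + 1) → V →ₗ[ℝ] W →ₗ[ℝ] G) :
    ∫ x in Icc a b, ∑ i, (β i (f x) (pd i g x) + β i (pd i f x) (g x)) =
      ∑ i, ((∫ y in Icc (a ∘ i.succAbove) (b ∘ i.succAbove),
          β i (f (i.insertNth (b i) y)) (g (i.insertNth (b i) y))) -
        ∫ y in Icc (a ∘ i.succAbove) (b ∘ i.succAbove),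
          β i (f (i.insertNth (a i) y)) (g (i.insertNth (a i) y))) := by
  have hfc := hf.contDiffOn_equivFun
  have hgc := hg.contDiffOn_equivFun
  have key := integral_divergence_bilinear_of_contDiffOn hΩ hab hK hfc hgc
    fun i => ((β i).compl₁₂ (Module.Basis.ofVectorSpace ℝ V).equivFun.symm.toLinearMap
      (Module.Basis.ofVectorSpace ℝ W).equivFun.symm.toLinearMap).toContinuousBilinearMap
  simp only [LinearMap.toContinuousBilinearMap_apply, LinearMap.compl₁₂_apply,
    LinearEquiv.coe_coe, LinearEquiv.symm_apply_apply] at key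
  rw [← key]
  refine setIntegral_congr_fun measurableSet_Icc fun x hx => ?_
  have hΩx := hΩ.mem_nhds (hK hx)
  simp only [pd_eq_equivFun_symm_fderiv ((hfc.contDiffAt hΩx).differentiableAt one_ne_zero),
    pd_eq_equivFun_symm_fderiv ((hgc.contDiffAt hΩx).differentiableAt one_ne_zero)]

end Coordinates

theorem rightDb_mul_add_mul_leftDb {m : ℕ} (f g : (Fin m → ℝ) → Cl m) (x : Fin m → ℝ) :
    rightDb f x * g x + f x * leftDb g x =
      ∑ i, (f x * e i * pd i g x + pd i f x * e i * g x) := by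
  rw [rightDb, leftDb, Finset.sum_mul, Finset.mul_sum, ← Finset.sum_add_distrib]
  exact Finset.sum_congr rfl fun i _ => (add_comm _ _).trans (congrArg _ (mul_assoc _ _ _).symm)

theorem bosonic_stokes {m : ℕ}
    (Ω : Set (Fin m → ℝ)) (hΩ : IsOpen Ω)
    (a b : Fin m → ℝ) (hab : a ≤ b) (hK : Set.Icc a b ⊆ Ω)
    (f g : (Fin m → ℝ) → Cl m) (hf : C1On f Ω) (hg : C1On g Ω) :
    ∑ i : Fin m,
        (faceInt a b i (b i) (fun x => f x * e i * g x) -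
          faceInt a b i (a i) (fun x => f x * e i * g x)) =
      vInt volume (Set.Icc a b) (fun x => rightDb f x * g x + f x * leftDb g x) := by
  obtain _ | n := m
  · simp [rightDb, leftDb, vInt]
  refine (Module.Basis.ofVectorSpace ℝ (Cl (n + 1))).ext_elem fun I => ?_
  rw [← Module.Basis.coord_apply, ← Module.Basis.coord_apply, map_sum, coord_vInt]
  simp only [map_sub, coord_faceInt]
  refine (integral_divergence_bilinear_of_C1On hΩ hab hK hf hg fun i =>
    (LinearMap.mul ℝ _ ∘ₗ LinearMap.mulRight ℝ (e i)).compr₂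
      ((Module.Basis.ofVectorSpace ℝ (Cl (n + 1))).coord I)).symm.trans ?_
  refine setIntegral_congr_fun measurableSet_Icc fun x _ => ?_
  simp [rightDb_mul_add_mul_leftDb]

end BosonicStokes
end
end

section
/- For all integers 0 ≤ k ≤ n and every R ∈ Λ_{2n} homogeneous of exterior degree 2n−2k, Δ_f^n( (θ²)^k·R ) = (−1)^k·4^k·(n!·k!/(n−k)!)·Δ_f^{n−k}R. (In the language of the paper: in the purely fermionic case, ∂_ẋ^{2n}(ẋ^{2k} R_{2n−2k}) = c(n,k)·∂_ẋ^{2n−2k}(R_{2n−2k}) with c(n,k) = (−1)^k 4^k n! k!/(n−k)!, since ẋ^{2k} = (θ²)^k and the square of the fermionic Dirac operator is Δ_f.) -/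
/-!
Write `Δf = 4 D` with `D = ∑ⱼ ∂_{θ_{2j-1}} ∂_{θ_{2j}}`. Contractions lower the exterior degree by
one, and Euler's identity `∑ₘ θₘ ∂_{θₘ} x = d x` for `x` of degree `d` gives the commutation rule
`D (θ² x) = (d - n) x + θ² D x`, hence
`D ((θ²)^(k+1) x) = (θ²)^(k+1) D x + (k+1)(d+k-n) (θ²)^k x`.
Inducting on `m`, for `x` of degree `2(m-k)` one gets `D^m ((θ²)^k x) = c(m,k) D^(m-k) x`, where `c`
obeys a Pascal-type recurrence solved by `c(m,k) = (-1)^k m(m-1)⋯(m-k+1) (n-m+1)⋯(n-m+k)`.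
At `m = n` this is `(-1)^k n! k! / (n-k)!`.
-/

noncomputable section

namespace SuperCauchy

/-- The Grassmann algebra Λ_{2n}, realized as the exterior algebra on 2n generators. -/
abbrev Λ (n : ℕ) : Type := ExteriorAlgebra ℝ (Fin (2*n) → ℝ)

/-- The Grassmann generator θ_j (0-based index j corresponds to θ_{j+1}). -/
def θ {n : ℕ} (j : Fin (2*n)) : Λ n := ExteriorAlgebra.ι ℝ (Pi.single j 1)

/-- The odd left derivation ∂_{θ_j}: left contraction with the j-th dual basis vector. -/
def dθ {n : ℕ} (j : Fin (2*n)) : Λ n →ₗ[ℝ] Λ n :=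
  CliffordAlgebra.contractLeft (LinearMap.proj j)

/-- The 0-based index of θ_{2j-1} (1-based), for j = 1,…,n. -/
def e2 {n : ℕ} (j : Fin n) : Fin (2*n) := ⟨2*j.val, by omega⟩
/-- The 0-based index of θ_{2j} (1-based), for j = 1,…,n. -/
def o2 {n : ℕ} (j : Fin n) : Fin (2*n) := ⟨2*j.val+1, by omega⟩

/-- The fermionic Laplacian Δ_f = 4 Σ_{j=1}^n ∂_{θ_{2j-1}} ∂_{θ_{2j}}. -/
def Δf (n : ℕ) : Λ n →ₗ[ℝ] Λ n :=
  (4:ℝ) • ∑ j : Fin n, dθ (e2 j) ∘ₗ dθ (o2 j)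

/-- θ² = Σ_{j=1}^n θ_{2j-1} θ_{2j}. -/
def θsq (n : ℕ) : Λ n := ∑ j : Fin n, θ (e2 j) * θ (o2 j)

/-- The d-th exterior power of Λ_{2n}: the elements homogeneous of exterior degree d. -/
def grade (n d : ℕ) : Submodule ℝ (Λ n) :=
  LinearMap.range (ExteriorAlgebra.ι ℝ : (Fin (2*n) → ℝ) →ₗ[ℝ] Λ n) ^ d

end SuperCauchy

namespace ExteriorAlgebra

open CliffordAlgebra

variable {R M : Type*} [CommRing R] [AddCommGroup M] [Module R M]

theorem ι_mul_ι_anticomm (u v : M) : ι R u * ι R v = -(ι R v * ι R u) :=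
  eq_neg_of_add_eq_zero_left (ι_add_mul_swap u v)

theorem ι_mem_exteriorPower_one (v : M) : ι R v ∈ ⋀[R]^1 M := by
  rw [exteriorPower, pow_one]
  exact ⟨v, rfl⟩

theorem mul_mem_exteriorPower {a b : ExteriorAlgebra R M} {c d : ℕ} (ha : a ∈ ⋀[R]^c M)
    (hb : b ∈ ⋀[R]^d M) : a * b ∈ ⋀[R]^(c + d) M := by
  rw [exteriorPower, pow_add]
  exact Submodule.mul_mem_mul ha hb

theorem contractLeft_eq_zero_of_mem_exteriorPower_zero (f : Module.Dual R M)
    {x : ExteriorAlgebra R M} (hx : x ∈ ⋀[R]^0 M) : contractLeft f x = 0 := by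
  rw [exteriorPower, pow_zero] at hx
  obtain ⟨r, rfl⟩ := Submodule.mem_one.mp hx
  exact contractLeft_algebraMap _ f r

theorem contractLeft_mem_exteriorPower (f : Module.Dual R M) :
    ∀ {d : ℕ} {x : ExteriorAlgebra R M}, x ∈ ⋀[R]^(d + 1) M → contractLeft f x ∈ ⋀[R]^d M
  | d, x, hx => by
    rw [exteriorPower, pow_succ'] at hx
    refine Submodule.mul_induction_on hx ?_ fun x y hx hy => by rw [map_add]; exact add_mem hx hy
    rintro _ ⟨v, rfl⟩ y hy
    rw [contractLeft_ι_mul]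
    refine sub_mem (Submodule.smul_mem _ _ hy) ?_
    cases d with
    | zero => simp [contractLeft_eq_zero_of_mem_exteriorPower_zero f hy]
    | succ d =>
      rw [exteriorPower, pow_succ']
      exact Submodule.mul_mem_mul ⟨v, rfl⟩ (contractLeft_mem_exteriorPower f hy)

theorem sum_ι_mul_contractLeft_of_mem_exteriorPower {ι' : Type*} [Fintype ι']
    (b : Module.Basis ι' R M) {d : ℕ} {x : ExteriorAlgebra R M} (hx : x ∈ ⋀[R]^d M) :
    ∑ i, ι R (b i) * contractLeft (b.coord i) x = d • x := by
  induction hx using Submodule.pow_induction_on_left' with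
  | algebraMap r => simp [contractLeft_algebraMap]
  | add x y d _ _ hx hy => simp only [map_add, mul_add, Finset.sum_add_distrib, hx, hy, smul_add]
  | mem_mul m hm d x _ hx =>
    obtain ⟨v, rfl⟩ := hm
    have expand : ∑ i, b.coord i v • ι R (b i) = ι R v := by
      simp_rw [← map_smul, ← map_sum, Module.Basis.coord_apply, b.sum_repr]
    calc ∑ i, ι R (b i) * contractLeft (b.coord i) (ι R v * x)
        = (∑ i, b.coord i v • ι R (b i)) * x
          + ι R v * ∑ i, ι R (b i) * contractLeft (b.coord i) x := by
          simp only [contractLeft_ι_mul, mul_sub, Finset.sum_mul, Finset.mul_sum, ← mul_assoc,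
            ι_mul_ι_anticomm (b _) v, neg_mul, sub_neg_eq_add, Finset.sum_add_distrib,
            mul_smul_comm, smul_mul_assoc]
      _ = (d + 1) • (ι R v * x) := by rw [expand, hx, mul_smul_comm, succ_nsmul']

end ExteriorAlgebra

namespace SuperCauchy

open ExteriorAlgebra

variable {n : ℕ}

theorem e2_injective : Function.Injective (e2 : Fin n → Fin (2*n)) := fun i j h => by
  simp only [e2, Fin.mk.injEq] at h; omega

theorem o2_injective : Function.Injective (o2 : Fin n → Fin (2*n)) := fun i j h => by
  simp only [o2, Fin.mk.injEq] at h; omega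

theorem e2_ne_o2 (i j : Fin n) : e2 i ≠ o2 j := fun h => by
  simp only [e2, o2, Fin.mk.injEq] at h; omega

theorem sum_eq_sum_e2_add_o2 {M : Type*} [AddCommMonoid M] (F : Fin (2*n) → M) :
    ∑ m, F m = ∑ j : Fin n, (F (e2 j) + F (o2 j)) := by
  rw [← (finProdFinEquiv.trans (finCongr (mul_comm n 2))).sum_comp, Fintype.sum_prod_type]
  refine Finset.sum_congr rfl fun j _ => ?_
  rw [Fin.sum_univ_two]
  congr 2
  · ext; simp [e2]
  · ext; simp [o2]; omega

theorem dθ_θ_mul (j m : Fin (2*n)) (x : Λ n) :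
    dθ j (θ m * x) = (if j = m then (1:ℝ) else 0) • x - θ m * dθ j x := by
  rw [θ, dθ, CliffordAlgebra.contractLeft_ι_mul, LinearMap.proj_apply, Pi.single_apply]

theorem sum_θ_mul_dθ_of_mem_grade {d : ℕ} {x : Λ n} (hx : x ∈ grade n d) :
    ∑ m, θ m * dθ m x = (d : ℝ) • x := by
  have h := sum_ι_mul_contractLeft_of_mem_exteriorPower (Pi.basisFun ℝ (Fin (2*n))) hx
  rw [← Nat.cast_smul_eq_nsmul ℝ] at h
  convert h using 3 with m
  · simp [θ]
  · rfl

variable (n) in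
def quarterΔf : Λ n →ₗ[ℝ] Λ n := ∑ j : Fin n, dθ (e2 j) ∘ₗ dθ (o2 j)

theorem Δf_eq_four_smul_quarterΔf : Δf n = (4:ℝ) • quarterΔf n := rfl

theorem quarterΔf_apply (x : Λ n) : quarterΔf n x = ∑ j, dθ (e2 j) (dθ (o2 j) x) := by
  simp [quarterΔf, LinearMap.sum_apply]

theorem dθ_dθ_θ_mul_θ_mul (i j : Fin n) (x : Λ n) :
    dθ (e2 i) (dθ (o2 i) (θ (e2 j) * (θ (o2 j) * x))) =
      (if i = j then θ (e2 j) * dθ (e2 j) x + θ (o2 j) * dθ (o2 j) x - x else 0)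
        + θ (e2 j) * (θ (o2 j) * dθ (e2 i) (dθ (o2 i) x)) := by
  have hne : o2 i ≠ e2 j := (e2_ne_o2 j i).symm
  by_cases h : i = j
  · subst h
    simp only [dθ_θ_mul, hne, e2_ne_o2, if_true, if_false, zero_smul, zero_sub, one_smul,
      map_neg, map_sub, mul_sub, mul_neg]
    module
  · simp only [dθ_θ_mul, hne, e2_ne_o2, e2_injective.eq_iff, o2_injective.eq_iff, h, if_false,
      zero_smul, zero_sub, mul_neg, neg_neg, zero_add]

theorem quarterΔf_θsq_mul {d : ℕ} {x : Λ n} (hx : x ∈ grade n d) :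
    quarterΔf n (θsq n * x) = ((d:ℝ) - n) • x + θsq n * quarterΔf n x := by
  have euler : ∑ j : Fin n, (θ (e2 j) * dθ (e2 j) x + θ (o2 j) * dθ (o2 j) x) = (d:ℝ) • x := by
    rw [← sum_eq_sum_e2_add_o2 (fun m => θ m * dθ m x), sum_θ_mul_dθ_of_mem_grade hx]
  simp only [quarterΔf_apply, θsq, Finset.sum_mul, Finset.mul_sum, mul_assoc, map_sum,
    dθ_dθ_θ_mul_θ_mul, Finset.sum_add_distrib, Finset.sum_ite_eq', Finset.mem_univ, if_true]
  rw [Finset.sum_comm (f := fun i j => θ (e2 j) * (θ (o2 j) * dθ (e2 i) (dθ (o2 i) x))),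
    Finset.sum_sub_distrib, euler]
  simp [sub_smul, Nat.cast_smul_eq_nsmul, nsmul_eq_mul]

theorem θsq_pow_mem_grade (k : ℕ) : θsq n ^ k ∈ grade n (2 * k) := by
  have hθsq : θsq n ∈ grade n 2 :=
    Submodule.sum_mem _ fun j _ =>
      mul_mem_exteriorPower (ι_mem_exteriorPower_one _) (ι_mem_exteriorPower_one _)
  rw [grade, pow_mul]
  exact Submodule.pow_mem_pow _ hθsq k

theorem quarterΔf_mem_grade {d : ℕ} {x : Λ n} (hx : x ∈ grade n (d + 2)) :
    quarterΔf n x ∈ grade n d := by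
  rw [quarterΔf_apply]
  exact Submodule.sum_mem _ fun j _ =>
    contractLeft_mem_exteriorPower _ (contractLeft_mem_exteriorPower _ hx)

theorem quarterΔf_eq_zero_of_mem_grade_zero {x : Λ n} (hx : x ∈ grade n 0) :
    quarterΔf n x = 0 := by
  simp [quarterΔf_apply, dθ, contractLeft_eq_zero_of_mem_exteriorPower_zero _ hx]

theorem quarterΔf_θsq_pow_succ_mul (k : ℕ) {d : ℕ} {x : Λ n} (hx : x ∈ grade n d) :
    quarterΔf n (θsq n ^ (k + 1) * x) =
      θsq n ^ (k + 1) * quarterΔf n x + (((k:ℝ) + 1) * (d + k - n)) • (θsq n ^ k * x) := by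
  induction k with
  | zero => simp [quarterΔf_θsq_mul hx, add_comm]
  | succ k ih =>
    rw [pow_succ', mul_assoc,
      quarterΔf_θsq_mul (mul_mem_exteriorPower (θsq_pow_mem_grade _) hx), ih]
    simp only [mul_add, mul_smul_comm, ← mul_assoc, ← pow_succ']
    push_cast
    module

variable (n) in
def laplacianCoeff (m k : ℕ) : ℝ :=
  (-1) ^ k * (descPochhammer ℝ k).eval (m : ℝ) * (ascPochhammer ℝ k).eval ((n : ℝ) - m + 1)

theorem laplacianCoeff_succ_succ (m k : ℕ) :
    laplacianCoeff n (m + 1) (k + 1) =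
      laplacianCoeff n m (k + 1) + (k + 1) * (2 * m - k - n) * laplacianCoeff n m k := by
  have desc_succ_left : (descPochhammer ℝ (k + 1)).eval ((m : ℝ) + 1) =
      (m + 1) * (descPochhammer ℝ k).eval (m : ℝ) := by
    simp [descPochhammer_succ_left, Polynomial.eval_comp]
  have asc_succ_left : (ascPochhammer ℝ (k + 1)).eval ((n : ℝ) - (m + 1) + 1) =
      (n - m) * (ascPochhammer ℝ k).eval ((n : ℝ) - m + 1) := by
    simp only [ascPochhammer_succ_left, Polynomial.eval_mul, Polynomial.eval_comp,
      Polynomial.eval_X, Polynomial.eval_add, Polynomial.eval_one]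
    ring_nf
  simp only [laplacianCoeff, Nat.cast_succ, desc_succ_left, asc_succ_left, descPochhammer_succ_eval,
    ascPochhammer_succ_eval]
  ring

theorem laplacianCoeff_succ_self (m : ℕ) : laplacianCoeff n m (m + 1) = 0 := by
  simp [laplacianCoeff, descPochhammer_eval_eq_descFactorial]

theorem laplacianCoeff_self (k : ℕ) :
    laplacianCoeff n n k = (-1) ^ k * n.descFactorial k * k.factorial := by
  simp [laplacianCoeff, descPochhammer_eval_eq_descFactorial]

theorem quarterΔf_pow_θsq_pow_mul {m k : ℕ} (hk : k ≤ m) {x : Λ n}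
    (hx : x ∈ grade n (2 * (m - k))) :
    (quarterΔf n ^ m) (θsq n ^ k * x) = laplacianCoeff n m k • (quarterΔf n ^ (m - k)) x := by
  induction m generalizing k x with
  | zero => obtain rfl := Nat.le_zero.mp hk; simp [laplacianCoeff]
  | succ m ih =>
    cases k with
    | zero => simp [laplacianCoeff]
    | succ k =>
      have hk' : k ≤ m := Nat.le_of_succ_le_succ hk
      rw [Nat.add_sub_add_right] at hx ⊢
      have raised : (quarterΔf n ^ m) (θsq n ^ (k + 1) * quarterΔf n x) =
          laplacianCoeff n m (k + 1) • (quarterΔf n ^ (m - k)) x := by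
        rcases hk'.lt_or_eq with hlt | rfl
        · have hDx : quarterΔf n x ∈ grade n (2 * (m - (k + 1))) :=
            quarterΔf_mem_grade (by convert hx using 2; omega)
          rw [ih hlt hDx, ← Module.End.mul_apply, ← pow_succ, show m - (k + 1) + 1 = m - k by omega]
        · rw [quarterΔf_eq_zero_of_mem_grade_zero (by simpa using hx), mul_zero, map_zero,
            laplacianCoeff_succ_self, zero_smul]
      rw [pow_succ, Module.End.mul_apply, quarterΔf_θsq_pow_succ_mul k hx, map_add, map_smul,
        raised, ih hk' hx, smul_smul, ← add_smul, laplacianCoeff_succ_succ]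
      congr 1
      push_cast [Nat.cast_sub hk']
      ring

theorem pow_fermionicLaplacian_thetaSq_pow_mul
    (n k : ℕ) (hk : k ≤ n) (R : Λ n) (hR : R ∈ grade n (2*n - 2*k)) :
    ((Δf n) ^ n : Λ n →ₗ[ℝ] Λ n) ((θsq n)^k * R) =
      ((-1:ℝ)^k * 4^k * ((n.factorial : ℝ) * (k.factorial : ℝ) / ((n-k).factorial : ℝ))) •
        (((Δf n) ^ (n-k) : Λ n →ₗ[ℝ] Λ n) R) := by
  rw [← Nat.mul_sub] at hR
  rw [Δf_eq_four_smul_quarterΔf, smul_pow, smul_pow, LinearMap.smul_apply, LinearMap.smul_apply,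
    quarterΔf_pow_θsq_pow_mul hk hR, smul_smul, smul_smul, laplacianCoeff_self]
  congr 1
  have four_pow : (4:ℝ) ^ n = 4 ^ k * 4 ^ (n - k) := by rw [← pow_add, Nat.add_sub_cancel' hk]
  have factorial_eq : ((n - k).factorial : ℝ) * n.descFactorial k = n.factorial := by
    exact_mod_cast Nat.factorial_mul_descFactorial hk
  rw [four_pow, ← factorial_eq]
  field_simp

end SuperCauchy
end
end

section
/- As linear operators on Λ_{2n}, ∂_{θ_{2n}} ∘ ∂_{θ_{2n−1}} ∘ ⋯ ∘ ∂_{θ_1} = ((−1)^n/(4^n·n!))·Δ_f^n; that is, the Berezin integral (extraction of the coefficient of θ_1⋯θ_{2n}) equals ((−1)^n/(4^n n!)) times the n-th power of the fermionic Laplacian. -/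
/-!
Both sides are multiples of the ordered product `∂₁ ∂₂ ⋯ ∂₂ₙ` of the contractions, which
anticommute and square to zero. The Berezin integral is that product with its `2n` factors
reversed, which costs the sign `(-1) ^ (2n choose 2) = (-1) ^ n`. The pair operators
`Dⱼ = ∂₂ⱼ₋₁ ∂₂ⱼ` are even, so they commute, and they square to zero; hence in the expansion of
`(∑ⱼ Dⱼ) ^ n` only the `n!` words using every `Dⱼ` exactly once survive, and each of them equals
`D₁ ⋯ Dₙ = ∂₁ ⋯ ∂₂ₙ`.
-/

noncomputable section

namespace SuperCauchy

/-- The Berezin integral ∫_B = ∂_{θ_{2n}} ∘ ⋯ ∘ ∂_{θ_1}. -/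
def berezin (n : ℕ) : Λ n →ₗ[ℝ] Λ n :=
  (List.ofFn (fun j : Fin (2*n) => dθ j)).foldl (fun acc f => f ∘ₗ acc) LinearMap.id

end SuperCauchy

section

variable {R : Type*}

theorem List.foldl_mul_left_eq_prod_reverse_mul [Monoid R] (l : List R) (x : R) :
    l.foldl (fun acc a => a * acc) x = l.reverse.prod * x := by
  induction l generalizing x with
  | nil => simp
  | cons a l ih => simp [ih, mul_assoc]

theorem List.prod_mul_eq_zsmul_mul_prod [Ring R] {a : R} {l : List R}
    (h : ∀ b ∈ l, a * b = -(b * a)) : l.prod * a = (-1 : ℤ) ^ l.length • (a * l.prod) := by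
  induction l with
  | nil => simp
  | cons b l ih =>
    rw [List.forall_mem_cons] at h
    have hba : b * a = -(a * b) := by rw [h.1, neg_neg]
    rw [List.prod_cons, mul_assoc, ih h.2, mul_smul_comm, ← mul_assoc, hba, neg_mul, smul_neg,
      List.length_cons, pow_succ, mul_neg_one, neg_smul, mul_assoc]

theorem List.prod_reverse_of_pairwise_anticomm [Ring R] {l : List R}
    (h : l.Pairwise fun a b => a * b = -(b * a)) :
    l.reverse.prod = (-1 : ℤ) ^ l.length.choose 2 • l.prod := by
  induction l with
  | nil => simp
  | cons a l ih =>
    rw [List.pairwise_cons] at h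
    rw [List.reverse_cons, List.prod_append, List.prod_singleton, ih h.2, smul_mul_assoc,
      List.prod_mul_eq_zsmul_mul_prod h.1, smul_smul, ← pow_add, List.length_cons,
      Nat.choose_succ_succ', Nat.choose_one_right, add_comm, List.prod_cons]

theorem commute_mul_of_anticomm [Ring R] {a b c : R} (hb : a * b = -(b * a))
    (hc : a * c = -(c * a)) : Commute a (b * c) := by
  rw [Commute, SemiconjBy, ← mul_assoc, hb, neg_mul, mul_assoc, hc, mul_neg, neg_neg, mul_assoc]

theorem mul_mul_self_eq_zero_of_anticomm [Ring R] {a b : R} (hab : b * a = -(a * b))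
    (ha : a * a = 0) : a * b * (a * b) = 0 := by
  rw [mul_assoc, ← mul_assoc b, hab, neg_mul, mul_neg, ← mul_assoc, ← mul_assoc, ha, zero_mul,
    zero_mul, neg_zero]

theorem Nat.two_mul_choose_two_add_self (n : ℕ) : (2 * n).choose 2 + n = 2 * (n * n) := by
  induction n with
  | zero => rfl
  | succ n ih =>
    rw [show 2 * (n + 1) = 2 * n + 1 + 1 by ring]
    simp only [Nat.choose_succ_succ', Nat.choose_zero_right, Nat.choose_one_right, zero_add,
      Nat.reduceAdd]
    nlinarith

theorem neg_one_pow_two_mul_choose_two [Ring R] (n : ℕ) :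
    (-1 : R) ^ (2 * n).choose 2 = (-1) ^ n := by
  have h := Nat.two_mul_choose_two_add_self n
  rw [neg_one_pow_eq_pow_mod_two, neg_one_pow_eq_pow_mod_two (n := n)]
  congr 1
  omega

theorem Commute.add_pow_succ_of_mul_self_eq_zero [Semiring R] {a b : R} (h : Commute a b)
    (ha : a * a = 0) (m : ℕ) : (a + b) ^ (m + 1) = b ^ (m + 1) + (m + 1) • (a * b ^ m) := by
  induction m with
  | zero => simp [add_comm]
  | succ m ih =>
    rw [pow_succ', ih, mul_add, add_mul, add_mul, mul_smul_comm, mul_smul_comm, ← mul_assoc,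
      ha, zero_mul, smul_zero, ← mul_assoc, ← h.eq, mul_assoc, ← pow_succ', ← pow_succ']
    simp only [succ_nsmul]
    abel

theorem List.sum_pow_eq_zero_of_length_lt [Semiring R] {l : List R} (hc : l.Pairwise Commute)
    (hsq : ∀ a ∈ l, a * a = 0) {m : ℕ} (hm : l.length < m) : l.sum ^ m = 0 := by
  induction l generalizing m with
  | nil => simp [zero_pow hm.ne']
  | cons a l ih =>
    rw [List.pairwise_cons] at hc
    rw [List.forall_mem_cons] at hsq
    obtain ⟨m, rfl⟩ : ∃ k, m = k + 1 := ⟨m - 1, by omega⟩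
    rw [List.length_cons] at hm
    rw [List.sum_cons, (Commute.list_sum_right a l hc.1).add_pow_succ_of_mul_self_eq_zero hsq.1,
      ih hc.2 hsq.2 (by omega), ih hc.2 hsq.2 (by omega)]
    simp

theorem List.sum_pow_length [Semiring R] {l : List R} (hc : l.Pairwise Commute)
    (hsq : ∀ a ∈ l, a * a = 0) : l.sum ^ l.length = l.length.factorial • l.prod := by
  induction l with
  | nil => simp
  | cons a l ih =>
    rw [List.pairwise_cons] at hc
    rw [List.forall_mem_cons] at hsq
    rw [List.sum_cons, List.length_cons,
      (Commute.list_sum_right a l hc.1).add_pow_succ_of_mul_self_eq_zero hsq.1,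
      List.sum_pow_eq_zero_of_length_lt hc.2 hsq.2 (Nat.lt_succ_self _), ih hc.2 hsq.2,
      zero_add, mul_smul_comm, smul_smul, Nat.factorial_succ, List.prod_cons]

theorem List.prod_ofFn_two_mul [Monoid R] {n : ℕ} (f : Fin (2 * n) → R) :
    (List.ofFn fun j : Fin n => f ⟨2 * j, by omega⟩ * f ⟨2 * j + 1, by omega⟩).prod =
      (List.ofFn f).prod := by
  rw [List.ofFn_mul' f, List.prod_flatten, List.map_ofFn]
  simp [Function.comp_def, List.ofFn_succ]

end

namespace SuperCauchy

variable {n : ℕ}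

theorem dθ_mul_dθ (i j : Fin (2 * n)) : dθ i * dθ j = -(dθ j * dθ i) :=
  LinearMap.ext (CliffordAlgebra.contractLeft_comm _ _)

theorem dθ_mul_self (i : Fin (2 * n)) : dθ i * dθ i = 0 :=
  LinearMap.ext (CliffordAlgebra.contractLeft_contractLeft _)

theorem berezin_eq_neg_one_pow_smul_prod (n : ℕ) :
    berezin n = (-1 : ℤ) ^ n • (List.ofFn (dθ (n := n))).prod := by
  have hanti : (List.ofFn (dθ (n := n))).Pairwise fun a b => a * b = -(b * a) :=
    List.pairwise_ofFn.2 fun i j _ => dθ_mul_dθ i j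
  have hrev : berezin n = (List.ofFn (dθ (n := n))).reverse.prod :=
    (List.foldl_mul_left_eq_prod_reverse_mul _ 1).trans (mul_one _)
  rw [hrev, List.prod_reverse_of_pairwise_anticomm hanti, List.length_ofFn,
    neg_one_pow_two_mul_choose_two]

def dθPair (j : Fin n) : Λ n →ₗ[ℝ] Λ n := dθ (e2 j) * dθ (o2 j)

theorem commute_dθPair (i j : Fin n) : Commute (dθPair i) (dθPair j) :=
  (commute_mul_of_anticomm (dθ_mul_dθ _ _) (dθ_mul_dθ _ _)).mul_left
    (commute_mul_of_anticomm (dθ_mul_dθ _ _) (dθ_mul_dθ _ _))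

theorem dθPair_mul_self (j : Fin n) : dθPair j * dθPair j = 0 :=
  mul_mul_self_eq_zero_of_anticomm (dθ_mul_dθ _ _) (dθ_mul_self _)

theorem Δf_eq_smul_sum_dθPair (n : ℕ) : Δf n = (4 : ℝ) • (List.ofFn (dθPair (n := n))).sum := by
  rw [List.sum_ofFn]
  rfl

theorem Δf_pow_eq_smul_prod (n : ℕ) :
    Δf n ^ n = ((4 : ℝ) ^ n * n.factorial) • (List.ofFn (dθ (n := n))).prod := by
  have hsum := List.sum_pow_length (l := List.ofFn (dθPair (n := n)))
    (List.pairwise_ofFn.2 fun i j _ => commute_dθPair i j)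
    (List.forall_mem_ofFn_iff.2 dθPair_mul_self)
  rw [List.length_ofFn] at hsum
  rw [Δf_eq_smul_sum_dθPair, smul_pow, hsum, ← Nat.cast_smul_eq_nsmul ℝ, smul_smul]
  exact congrArg _ (List.prod_ofFn_two_mul dθ)

theorem berezin_eq_smul_pow_fermionicLaplacian (n : ℕ) :
    berezin n = (((-1:ℝ)^n) / (4^n * (n.factorial : ℝ))) • ((Δf n) ^ n : Λ n →ₗ[ℝ] Λ n) := by
  rw [berezin_eq_neg_one_pow_smul_prod, Δf_pow_eq_smul_prod, smul_smul,
    ← Int.cast_smul_eq_zsmul ℝ]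
  congr 1
  push_cast
  field_simp

end SuperCauchy
end
end
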